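/- arXiv:2412.20408 — 2 statements merged into one kernel-verified Lean document; each statement's English description precedes it below -/
import Mathlib

section
/- For every dimension d ≥ 1 and every α ∈ (0,2), the constant c₀(d,α) := ∫_{ℝ^d} (1 − cos z₁)/|z|^{d+α} dz equals π^{d/2}·|Γ(−α/2)| / (2^α · Γ((d+α)/2)), where Γ is the Gamma function. -/
/-!
Subordination: for `s = (n + α) / 2` and `z ≠ 0`,
`‖z‖ ^ (-(n + α)) = Γ(s)⁻¹ ∫₀^∞ t ^ (s - 1) exp (-t ‖z‖²) dt`. After Tonelli (in `ℝ≥0∞`, so that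
no integrability is needed), the `z`-integral is a Gaussian Fourier transform,
`∫ (1 - cos ⟪w, z⟫) exp (-t ‖z‖²) dz = (π / t) ^ (n / 2) (1 - exp (-‖w‖² / 4t))`, and what
remains is `π ^ (n / 2) ∫₀^∞ t ^ (α / 2 - 1) (1 - exp (-c / t)) dt` with `c = ‖w‖² / 4`.
Substituting `t ↦ 1 / t` and integrating by parts turns this into a Gamma integral, with value
`c ^ a Γ(1 - a) / a = c ^ a |Γ(-a)|` for `a = α / 2`.
-/

open MeasureTheory Real Set Filter
open scoped Topology RealInnerProductSpace

lemma one_sub_exp_neg_nonneg {x : ℝ} (hx : 0 ≤ x) : 0 ≤ 1 - exp (-x) := by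
  simpa using exp_le_one_iff.2 (neg_nonpos.2 hx)

lemma one_sub_exp_neg_le (x : ℝ) : 1 - exp (-x) ≤ x := by
  linarith [one_sub_le_exp_neg x]

lemma one_sub_exp_neg_le_one (x : ℝ) : 1 - exp (-x) ≤ 1 := by
  linarith [exp_pos (-x)]

lemma integrableOn_one_sub_exp_neg_mul_mul_rpow {a c : ℝ} (ha0 : 0 < a) (ha1 : a < 1)
    (hc : 0 ≤ c) : IntegrableOn (fun x => (1 - exp (-(c * x))) * x ^ (-a - 1)) (Ioi 0) := by
  have hmeas : Measurable fun x : ℝ => (1 - exp (-(c * x))) * x ^ (-a - 1) := by fun_prop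
  have hnorm : ∀ x ∈ Ioi (0 : ℝ),
      ‖(1 - exp (-(c * x))) * x ^ (-a - 1)‖ = (1 - exp (-(c * x))) * x ^ (-a - 1) := fun x hx =>
    Real.norm_of_nonneg (mul_nonneg (one_sub_exp_neg_nonneg (mul_nonneg hc (le_of_lt hx)))
      (rpow_nonneg (le_of_lt hx) _))
  rw [← Ioc_union_Ioi_eq_Ioi zero_le_one]
  refine IntegrableOn.union ?_ ?_
  · have hg : IntegrableOn (fun x : ℝ => c * x ^ (-a)) (Ioc 0 1) :=
      ((integrableOn_Ioc_iff_integrableOn_Ioo).2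
        ((intervalIntegral.integrableOn_Ioo_rpow_iff one_pos).2 (by linarith))).const_mul c
    refine hg.mono' hmeas.aestronglyMeasurable
      (ae_restrict_of_forall_mem measurableSet_Ioc fun x hx => ?_)
    rw [hnorm x hx.1]
    calc (1 - exp (-(c * x))) * x ^ (-a - 1) ≤ c * x * x ^ (-a - 1) :=
          mul_le_mul_of_nonneg_right (one_sub_exp_neg_le _) (rpow_nonneg hx.1.le _)
      _ = c * x ^ (-a) := by
          rw [mul_assoc, ← rpow_one_add' hx.1.le (by linarith)]; ring_nf
  · refine (integrableOn_Ioi_rpow_of_lt (a := -a - 1) (by linarith) one_pos).mono'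
      hmeas.aestronglyMeasurable (ae_restrict_of_forall_mem measurableSet_Ioi fun x hx => ?_)
    have hx0 : (0 : ℝ) < x := zero_lt_one.trans hx
    rw [hnorm x hx0]
    exact mul_le_of_le_one_left (rpow_nonneg hx0.le _) (one_sub_exp_neg_le_one _)

lemma tendsto_one_sub_exp_neg_mul_mul_rpow_nhdsGT_zero {a c : ℝ} (ha1 : a < 1) (hc : 0 ≤ c) :
    Tendsto (fun x => (1 - exp (-(c * x))) * x ^ (-a)) (𝓝[>] 0) (𝓝 0) := by
  refine squeeze_zero_norm' (a := fun x => c * x ^ (1 - a)) ?_ ?_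
  · filter_upwards [self_mem_nhdsWithin] with x (hx : (0 : ℝ) < x)
    rw [norm_mul, Real.norm_of_nonneg (one_sub_exp_neg_nonneg (by positivity)),
      Real.norm_of_nonneg (rpow_nonneg hx.le _), show (1 : ℝ) - a = 1 + -a by ring,
      rpow_one_add' hx.le (by linarith), ← mul_assoc]
    gcongr
    exact one_sub_exp_neg_le _
  · simpa [zero_rpow (by linarith : (1 : ℝ) - a ≠ 0)] using
      ((continuousAt_rpow_const 0 (1 - a) (Or.inr (by linarith))).const_mul c).tendsto.mono_left
        nhdsWithin_le_nhds

lemma integral_one_sub_exp_neg_mul_mul_rpow {a c : ℝ} (ha0 : 0 < a) (ha1 : a < 1) (hc : 0 < c) :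
    ∫ x in Ioi 0, (1 - exp (-(c * x))) * x ^ (-a - 1) = c ^ a * (Gamma (1 - a) / a) := by
  have hu : ∀ x ∈ Ioi (0 : ℝ),
      HasDerivAt (fun x => 1 - exp (-(c * x))) (c * exp (-(c * x))) x := fun x _ => by
    simpa [mul_comm] using (((hasDerivAt_id x).const_mul c).neg.exp).const_sub 1
  have hv : ∀ x ∈ Ioi (0 : ℝ), HasDerivAt (fun x => -x ^ (-a) / a) (x ^ (-a - 1)) x :=
    fun x hx => by
      have h := (hasDerivAt_rpow_const (p := -a) (Or.inl (ne_of_gt hx))).neg.div_const a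
      rwa [show -(-a * x ^ (-a - 1)) / a = x ^ (-a - 1) by field_simp] at h
  have hu'v : IntegrableOn (fun x => c * exp (-(c * x)) * (-x ^ (-a) / a)) (Ioi 0) := by
    refine IntegrableOn.congr_fun (Integrable.const_mul
      (integrableOn_rpow_mul_exp_neg_mul_rpow (s := -a) (by linarith) one_pos hc) (-c / a))
      (fun x _ => ?_) measurableSet_Ioi
    simp only [rpow_one]
    ring_nf
  have h_zero : Tendsto (fun x => (1 - exp (-(c * x))) * (-x ^ (-a) / a)) (𝓝[>] 0) (𝓝 0) := by
    simpa only [neg_zero, zero_div, mul_neg, neg_div, mul_div_assoc] using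
      (tendsto_one_sub_exp_neg_mul_mul_rpow_nhdsGT_zero ha1 hc.le).neg.div_const a
  have h_infty : Tendsto (fun x => (1 - exp (-(c * x))) * (-x ^ (-a) / a)) atTop (𝓝 0) := by
    have hu1 : Tendsto (fun x => 1 - exp (-(c * x))) atTop (𝓝 1) := by
      simpa using (tendsto_exp_neg_atTop_nhds_zero.comp
        (tendsto_id.const_mul_atTop hc)).const_sub 1
    simpa using hu1.mul ((tendsto_rpow_neg_atTop ha0).neg.div_const a)
  rw [integral_Ioi_mul_deriv_eq_deriv_mul hu hv
    (integrableOn_one_sub_exp_neg_mul_mul_rpow ha0 ha1 hc.le) hu'v h_zero h_infty]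
  have hu'v_eq : ∫ x in Ioi 0, c * exp (-(c * x)) * (-x ^ (-a) / a)
      = -(c / a) * ∫ x in Ioi 0, x ^ ((1 - a) - 1) * exp (-(c * x)) := by
    rw [← integral_const_mul]
    refine setIntegral_congr_fun measurableSet_Ioi fun x _ => ?_
    ring_nf
  rw [hu'v_eq, integral_rpow_mul_exp_neg_mul_Ioi (by linarith) hc, one_div, inv_rpow hc.le,
    ← rpow_neg hc.le, neg_sub, rpow_sub_one hc.ne']
  field_simp
  ring

-- The integrand of `integral_comp_rpow_Ioi` at `p = -1`.
lemma one_sub_exp_neg_mul_mul_rpow_comp_inv (a c : ℝ) {x : ℝ} (hx : 0 < x) :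
    (|(-1 : ℝ)| * x ^ ((-1 : ℝ) - 1)) •
        ((1 - exp (-(c * x ^ (-1 : ℝ)))) * (x ^ (-1 : ℝ)) ^ (-a - 1))
      = x ^ (a - 1) * (1 - exp (-(c / x))) := by
  rw [rpow_neg_one, inv_rpow hx.le, ← rpow_neg hx.le, smul_eq_mul, abs_neg, abs_one, one_mul,
    mul_left_comm, ← mul_assoc, mul_assoc, ← rpow_add hx, div_eq_mul_inv]
  ring_nf

lemma integrableOn_rpow_mul_one_sub_exp_neg_div {a c : ℝ} (ha0 : 0 < a) (ha1 : a < 1)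
    (hc : 0 ≤ c) : IntegrableOn (fun t => t ^ (a - 1) * (1 - exp (-(c / t)))) (Ioi 0) :=
  ((integrableOn_Ioi_comp_rpow_iff _ (by norm_num)).2
    (integrableOn_one_sub_exp_neg_mul_mul_rpow ha0 ha1 hc)).congr_fun
    (fun _ hx => one_sub_exp_neg_mul_mul_rpow_comp_inv a c hx) measurableSet_Ioi

lemma integral_rpow_mul_one_sub_exp_neg_div {a c : ℝ} (ha0 : 0 < a) (ha1 : a < 1) (hc : 0 < c) :
    ∫ t in Ioi 0, t ^ (a - 1) * (1 - exp (-(c / t))) = c ^ a * (Gamma (1 - a) / a) := by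
  rw [← integral_one_sub_exp_neg_mul_mul_rpow ha0 ha1 hc,
    ← integral_comp_rpow_Ioi (fun x => (1 - exp (-(c * x))) * x ^ (-a - 1))
      (by norm_num : (-1 : ℝ) ≠ 0)]
  exact setIntegral_congr_fun measurableSet_Ioi fun _ hx =>
    (one_sub_exp_neg_mul_mul_rpow_comp_inv a c hx).symm

lemma abs_Gamma_neg {a : ℝ} (ha0 : 0 < a) (ha1 : a < 1) : |Gamma (-a)| = Gamma (1 - a) / a := by
  have h := Gamma_add_one (neg_ne_zero.2 ha0.ne')
  rw [neg_add_eq_sub] at h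
  have hneg : Gamma (-a) < 0 := by
    nlinarith [Gamma_pos_of_pos (show 0 < 1 - a by linarith)]
  rw [h, abs_of_neg hneg]
  field_simp

lemma lintegral_rpow_mul_exp_neg_mul_Ioi {s r : ℝ} (hs : 0 < s) (hr : 0 < r) :
    ∫⁻ t in Ioi 0, ENNReal.ofReal (t ^ (s - 1)) * ENNReal.ofReal (exp (-t * r))
      = ENNReal.ofReal (Gamma s / r ^ s) := by
  simp_rw [← ENNReal.ofReal_mul' (exp_nonneg _)]
  have hint : IntegrableOn (fun t : ℝ => t ^ (s - 1) * exp (-t * r)) (Ioi 0) :=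
    (integrableOn_rpow_mul_exp_neg_mul_rpow (s := s - 1) (by linarith) one_pos hr).congr_fun
      (fun t _ => by simp only [rpow_one, neg_mul, mul_comm r t]) measurableSet_Ioi
  rw [← ofReal_integral_eq_lintegral_ofReal hint (ae_restrict_of_forall_mem measurableSet_Ioi
    fun t ht => mul_nonneg (rpow_nonneg (le_of_lt ht) _) (exp_nonneg _))]
  simp_rw [neg_mul, mul_comm _ r]
  rw [integral_rpow_mul_exp_neg_mul_Ioi hs hr, one_div, inv_rpow hr.le, div_eq_inv_mul]

section InnerProductSpace

variable {V : Type*} [NormedAddCommGroup V] [InnerProductSpace ℝ V]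

lemma re_cexp_neg_mul_sq_norm_add_I_mul_inner (t : ℝ) (w v : V) :
    (Complex.exp (-(t : ℂ) * ‖v‖ ^ 2 + Complex.I * ⟪w, v⟫)).re
      = cos ⟪w, v⟫ * exp (-t * ‖v‖ ^ 2) := by
  rw [Complex.exp_re, mul_comm]
  congr 2 <;> simp [← Complex.ofReal_pow]

lemma ofReal_one_sub_cos_inner_div_norm_rpow_eq_lintegral (w z : V) {s : ℝ} (hs : 0 < s) :
    ENNReal.ofReal ((1 - cos ⟪w, z⟫) / ‖z‖ ^ (2 * s))
      = ENNReal.ofReal (Gamma s)⁻¹ * ∫⁻ t in Ioi 0, ENNReal.ofReal (1 - cos ⟪w, z⟫) *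
          (ENNReal.ofReal (t ^ (s - 1)) * ENNReal.ofReal (exp (-t * ‖z‖ ^ 2))) := by
  rw [lintegral_const_mul' _ _ ENNReal.ofReal_ne_top]
  rcases eq_or_ne z 0 with rfl | hz
  · simp -- `1 - cos ⟪w, 0⟫ = 0` kills the divergent integral
  have hΓ : 0 < Gamma s := Gamma_pos_of_pos hs
  rw [lintegral_rpow_mul_exp_neg_mul_Ioi hs (by positivity),
    ← ENNReal.ofReal_mul (sub_nonneg.2 (cos_le_one _)),
    ← ENNReal.ofReal_mul (inv_nonneg.2 hΓ.le),
    ← rpow_two, ← rpow_mul (norm_nonneg z)]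
  congr 1
  field_simp

variable [FiniteDimensional ℝ V] [MeasurableSpace V] [BorelSpace V]

lemma integrable_cos_inner_mul_exp_neg_mul_sq_norm {t : ℝ} (ht : 0 < t) (w : V) :
    Integrable fun v : V => cos ⟪w, v⟫ * exp (-t * ‖v‖ ^ 2) := by
  simpa only [RCLike.re_to_complex, re_cexp_neg_mul_sq_norm_add_I_mul_inner] using
    (GaussianFourier.integrable_cexp_neg_mul_sq_norm_add (show 0 < (t : ℂ).re from ht)
      Complex.I w).re

lemma integral_cos_inner_mul_exp_neg_mul_sq_norm {t : ℝ} (ht : 0 < t) (w : V) :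
    ∫ v : V, cos ⟪w, v⟫ * exp (-t * ‖v‖ ^ 2)
      = (π / t) ^ (Module.finrank ℝ V / 2 : ℝ) * exp (-‖w‖ ^ 2 / (4 * t)) := by
  have h := integral_re (GaussianFourier.integrable_cexp_neg_mul_sq_norm_add
    (show 0 < (t : ℂ).re from ht) Complex.I w)
  simp only [RCLike.re_to_complex, re_cexp_neg_mul_sq_norm_add_I_mul_inner] at h
  rw [h, GaussianFourier.integral_cexp_neg_mul_sq_norm_add (show 0 < (t : ℂ).re from ht)]
  have hpow : ((π : ℂ) / t) ^ ((Module.finrank ℝ V : ℂ) / 2)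
      = (((π / t) ^ (Module.finrank ℝ V / 2 : ℝ) : ℝ) : ℂ) := by
    rw [← Complex.ofReal_div, Complex.ofReal_cpow (by positivity)]
    norm_num
  have hexp :
      Complex.I ^ 2 * (‖w‖ : ℂ) ^ 2 / (4 * t) = ((-‖w‖ ^ 2 / (4 * t) : ℝ) : ℂ) := by
    push_cast
    rw [Complex.I_sq]
    ring
  rw [hpow, hexp, ← Complex.ofReal_exp, ← Complex.ofReal_mul, Complex.ofReal_re]

lemma lintegral_one_sub_cos_inner_mul_exp_neg_mul_sq_norm {t : ℝ} (ht : 0 < t) (w : V) :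
    ∫⁻ v : V, ENNReal.ofReal (1 - cos ⟪w, v⟫) * ENNReal.ofReal (exp (-t * ‖v‖ ^ 2))
      = ENNReal.ofReal
          ((π / t) ^ (Module.finrank ℝ V / 2 : ℝ) * (1 - exp (-‖w‖ ^ 2 / (4 * t)))) := by
  have hgauss : Integrable fun v : V => exp (-t * ‖v‖ ^ 2) := by
    simpa using integrable_cos_inner_mul_exp_neg_mul_sq_norm ht (0 : V)
  have hint : Integrable fun v : V => (1 - cos ⟪w, v⟫) * exp (-t * ‖v‖ ^ 2) :=
    (hgauss.sub (integrable_cos_inner_mul_exp_neg_mul_sq_norm ht w)).congr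
      (ae_of_all _ fun v => by simp only [Pi.sub_apply]; ring)
  simp_rw [← ENNReal.ofReal_mul (sub_nonneg.2 (cos_le_one _))]
  rw [← ofReal_integral_eq_lintegral_ofReal hint
    (ae_of_all _ fun v => mul_nonneg (sub_nonneg.2 (cos_le_one _)) (exp_nonneg _))]
  simp_rw [sub_mul, one_mul]
  rw [integral_sub hgauss (integrable_cos_inner_mul_exp_neg_mul_sq_norm ht w),
    GaussianFourier.integral_rexp_neg_mul_sq_norm ht, integral_cos_inner_mul_exp_neg_mul_sq_norm ht,
    mul_one_sub]

lemma lintegral_one_sub_cos_inner_div_norm_rpow (w : V) {s : ℝ} (hs : 0 < s) :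
    ∫⁻ z : V, ENNReal.ofReal ((1 - cos ⟪w, z⟫) / ‖z‖ ^ (2 * s))
      = ENNReal.ofReal (Gamma s)⁻¹ * ∫⁻ t in Ioi 0, ENNReal.ofReal (t ^ (s - 1) *
          ((π / t) ^ (Module.finrank ℝ V / 2 : ℝ) * (1 - exp (-‖w‖ ^ 2 / (4 * t))))) := by
  simp_rw [ofReal_one_sub_cos_inner_div_norm_rpow_eq_lintegral w _ hs]
  rw [lintegral_const_mul' _ _ ENNReal.ofReal_ne_top, lintegral_lintegral_swap (by fun_prop)]
  congr 1
  refine setLIntegral_congr_fun measurableSet_Ioi fun t ht => ?_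
  simp_rw [mul_left_comm (ENNReal.ofReal (1 - _))]
  rw [lintegral_const_mul' _ _ ENNReal.ofReal_ne_top,
    lintegral_one_sub_cos_inner_mul_exp_neg_mul_sq_norm ht,
    ← ENNReal.ofReal_mul (rpow_nonneg (le_of_lt ht) _)]

theorem integral_one_sub_cos_inner_div_norm_rpow (w : V) {α : ℝ} (hα0 : 0 < α)
    (hα2 : α < 2) :
    ∫ z : V, (1 - cos ⟪w, z⟫) / ‖z‖ ^ ((Module.finrank ℝ V : ℝ) + α)
      = π ^ ((Module.finrank ℝ V : ℝ) / 2) * ‖w‖ ^ α * |Gamma (-α / 2)|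
        / (2 ^ α * Gamma (((Module.finrank ℝ V : ℝ) + α) / 2)) := by
  set n : ℝ := (Module.finrank ℝ V : ℝ)
  set s := (n + α) / 2 with hs_def
  rcases eq_or_ne w 0 with rfl | hw
  · simp [zero_rpow hα0.ne']
  have hs : 0 < s := by positivity
  have hc : 0 < ‖w‖ ^ 2 / 4 := by positivity
  have hα0' : 0 < α / 2 := by positivity
  have hα2' : α / 2 < 1 := by linarith
  have hF_nonneg (z : V) : 0 ≤ (1 - cos ⟪w, z⟫) / ‖z‖ ^ (n + α) :=
    div_nonneg (sub_nonneg.2 (cos_le_one _)) (rpow_nonneg (norm_nonneg _) _)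
  have hJ (t : ℝ) (ht : t ∈ Ioi 0) :
      t ^ (s - 1) * ((π / t) ^ (n / 2) * (1 - exp (-‖w‖ ^ 2 / (4 * t))))
        = π ^ (n / 2) * (t ^ (α / 2 - 1) * (1 - exp (-(‖w‖ ^ 2 / 4 / t)))) := by
    rw [div_rpow pi_pos.le (le_of_lt ht), show α / 2 - 1 = s - 1 - n / 2 by rw [hs_def]; ring,
      rpow_sub ht (s - 1), show -‖w‖ ^ 2 / (4 * t) = -(‖w‖ ^ 2 / 4 / t) by ring]
    ring
  have hJ_nonneg (t : ℝ) (ht : t ∈ Ioi 0) :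
      0 ≤ π ^ (n / 2) * (t ^ (α / 2 - 1) * (1 - exp (-(‖w‖ ^ 2 / 4 / t)))) :=
    mul_nonneg (rpow_nonneg pi_pos.le _) (mul_nonneg (rpow_nonneg (le_of_lt ht) _)
      (one_sub_exp_neg_nonneg (div_nonneg hc.le (le_of_lt ht))))
  rw [integral_eq_lintegral_of_nonneg_ae (ae_of_all _ hF_nonneg)
      (Measurable.aestronglyMeasurable (by fun_prop)),
    show n + α = 2 * s by rw [hs_def]; ring, lintegral_one_sub_cos_inner_div_norm_rpow w hs,
    setLIntegral_congr_fun measurableSet_Ioi fun t ht => congrArg ENNReal.ofReal (hJ t ht),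
    ← ofReal_integral_eq_lintegral_ofReal
      ((integrableOn_rpow_mul_one_sub_exp_neg_div hα0' hα2' hc.le).const_mul _)
      (ae_restrict_of_forall_mem measurableSet_Ioi hJ_nonneg),
    integral_const_mul, integral_rpow_mul_one_sub_exp_neg_div hα0' hα2' hc]
  have hcpow : (‖w‖ ^ 2 / 4) ^ (α / 2) = ‖w‖ ^ α / 2 ^ α := by
    rw [show ‖w‖ ^ 2 / 4 = (‖w‖ / 2) ^ (2 : ℝ) by rw [rpow_two]; ring,
      ← rpow_mul (by positivity), div_rpow (norm_nonneg _) zero_le_two]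
    ring_nf
  have hΓ : 0 < Gamma s := Gamma_pos_of_pos hs
  have hΓ' : 0 < Gamma (1 - α / 2) := Gamma_pos_of_pos (by linarith)
  rw [← ENNReal.ofReal_mul (inv_nonneg.2 hΓ.le), ENNReal.toReal_ofReal (by positivity), neg_div,
    abs_Gamma_neg hα0' hα2', hcpow]
  field_simp

end InnerProductSpace

/-- For every dimension `d ≥ 1` and every `α ∈ (0,2)`, the constant
`c₀(d,α) := ∫_{ℝ^d} (1 − cos z₁)/|z|^{d+α} dz` equals
`π^{d/2}·|Γ(−α/2)| / (2^α · Γ((d+α)/2))`, where `Γ` is the Gamma function. -/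
theorem stmt_1 (d : ℕ) (hd : 0 < d) (α : ℝ) (hα0 : 0 < α) (hα2 : α < 2) :
    (∫ z : EuclideanSpace ℝ (Fin d), (1 - Real.cos (z ⟨0, hd⟩)) / ‖z‖ ^ ((d : ℝ) + α)) =
      Real.pi ^ ((d : ℝ) / 2) * |Real.Gamma (-α / 2)| /
        (2 ^ α * Real.Gamma (((d : ℝ) + α) / 2)) := by
  simpa [EuclideanSpace.inner_single_left] using
    integral_one_sub_cos_inner_div_norm_rpow (EuclideanSpace.single (⟨0, hd⟩ : Fin d) (1 : ℝ))
      hα0 hα2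
end

section
/- Let d ≥ 1, 0 < α < 2, and let μ : ℝ^d × ℝ^d → ℝ be measurable with μ(x,y) ≥ μ₋ > 0 for all x,y. If u : ℝ^d → ℂ is ℤ^d-periodic with u|_Ω ∈ L²(Ω) (Ω = [0,1)^d) and (1/2) ∫_{ℝ^d} dy ∫_Ω dx μ(x,y) |u(x) − u(y)|² / |x − y|^{d+α} = 0, then u is equal to a constant almost everywhere on ℝ^d. -/
/-!
The energy dominates `μ₋ ∫∫ |u(x) - u(y)|² / |x - y|^{d+α}`, whose integrand is positive
off the diagonal wherever `u(x) ≠ u(y)`. So its vanishing forces `u(x) = u(y)` for a.e.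
`y ∈ ℝ^d` and a.e. `x ∈ Ω`, which makes `u` a.e. constant. For this the integrand must be
measurable on `ℝ^d × Ω`; since `Ω` is a fundamental domain of `ℤ^d`, a periodic function
measurable on `Ω` is measurable on `ℝ^d`.
-/

open MeasureTheory Real
open scoped ENNReal

theorem MeasureTheory.IsAddFundamentalDomain.aestronglyMeasurable_of_restrict
    {G α β : Type*} [AddGroup G] [Countable G] [AddAction G α] [MeasurableSpace α]
    [MeasurableConstVAdd G α] {μ : Measure α} [VAddInvariantMeasure G α μ]
    [TopologicalSpace β] [TopologicalSpace.PseudoMetrizableSpace β] {s : Set α}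
    (hs : IsAddFundamentalDomain G s μ) {f : α → β} (hf : ∀ (g : G) x, f (g +ᵥ x) = f x)
    (h : AEStronglyMeasurable f (μ.restrict s)) : AEStronglyMeasurable f μ := by
  rw [← hs.sum_restrict, aestronglyMeasurable_sum_measure_iff]
  exact fun g => (hs.aestronglyMeasurable_on_iff (hs.vadd g) hf).mp h

theorem PiLp.fundamentalDomain_basisFun (d : ℕ) :
    ZSpan.fundamentalDomain (PiLp.basisFun 2 ℝ (Fin d)) =
      {x : EuclideanSpace ℝ (Fin d) | ∀ i, 0 ≤ x i ∧ x i < 1} := by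
  ext x; simp

theorem PiLp.apply_vadd_span_basisFun {d : ℕ} {β : Type*} {u : EuclideanSpace ℝ (Fin d) → β}
    (hper : ∀ (x : EuclideanSpace ℝ (Fin d)) (n : Fin d → ℤ),
      u (x + (WithLp.equiv 2 (Fin d → ℝ)).symm (fun i => (n i : ℝ))) = u x)
    (g : Submodule.span ℤ (Set.range (PiLp.basisFun 2 ℝ (Fin d))))
    (x : EuclideanSpace ℝ (Fin d)) :
    u (g +ᵥ x) = u x := by
  choose n hn using ((PiLp.basisFun 2 ℝ (Fin d)).mem_span_iff_repr_mem ℤ g).mp g.2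
  have hg : (g : EuclideanSpace ℝ (Fin d)) =
      (WithLp.equiv 2 (Fin d → ℝ)).symm (fun i => (n i : ℝ)) := by
    ext i; simpa using (hn i).symm
  rw [Submodule.vadd_def, vadd_eq_add, hg, add_comm, hper]

theorem exists_ae_eq_const_of_ae_ae_eq {α β : Type*} [MeasurableSpace α] {ν ρ : Measure α}
    [NeZero ν] [NeZero ρ] {f : α → β} (h : ∀ᵐ y ∂ν, ∀ᵐ x ∂ρ, f x = f y) :
    ∃ c, ∀ᵐ y ∂ν, f y = c := by
  obtain ⟨y₀, hy₀⟩ := h.exists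
  refine ⟨f y₀, h.mono fun y hy => ?_⟩
  obtain ⟨x, hxy, hxy₀⟩ := (hy.and hy₀).exists
  rw [← hxy, hxy₀]

namespace MeasureTheory

variable {E F : Type*} [NormedAddCommGroup E] [MeasurableSpace E] [BorelSpace E]
  [SecondCountableTopology E] [NormedAddCommGroup F] {ν ρ : Measure E} [SFinite ρ] {c s : ℝ}

theorem StronglyMeasurable.ae_ae_eq_of_lintegral_lintegral_eq_zero {g : E → F}
    (hg : StronglyMeasurable g) (hc : 0 < c)
    (h : ∫⁻ y, ∫⁻ x, ENNReal.ofReal (c * ‖g x - g y‖ ^ 2 / ‖x - y‖ ^ s) ∂ρ ∂ν = 0) :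
    ∀ᵐ y ∂ν, ∀ᵐ x ∂ρ, g x = g y := by
  set K : E × E → ℝ≥0∞ := fun p => ENNReal.ofReal (c * ‖g p.2 - g p.1‖ ^ 2 / ‖p.2 - p.1‖ ^ s)
  have hK : Measurable K := by
    refine ENNReal.measurable_ofReal.comp (Measurable.div (measurable_const.mul ?_) ?_)
    · exact ((hg.comp_measurable measurable_snd).sub
        (hg.comp_measurable measurable_fst)).norm.measurable.pow_const 2
    · exact (measurable_snd.sub measurable_fst).norm.pow_const s
  have hK_ae : ∀ᵐ y ∂ν, ∀ᵐ x ∂ρ, K (y, x) = 0 :=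
    ((lintegral_eq_zero_iff hK.lintegral_prod_right').mp h).mono fun y hy =>
      (lintegral_eq_zero_iff (hK.comp measurable_prodMk_left)).mp hy
  filter_upwards [hK_ae] with y hy
  filter_upwards [hy] with x hx
  rcases eq_or_ne x y with rfl | hxy
  · rfl
  have hpos : 0 < ‖x - y‖ ^ s := rpow_pos_of_pos (norm_pos_iff.mpr (sub_ne_zero.mpr hxy)) s
  have hq : c * ‖g x - g y‖ ^ 2 / ‖x - y‖ ^ s ≤ 0 := ENNReal.ofReal_eq_zero.mp hx
  have : ‖g x - g y‖ ^ 2 ≤ 0 :=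
    nonpos_of_mul_nonpos_right (by simpa using (div_le_iff₀ hpos).mp hq) hc
  simpa [sub_eq_zero] using this

theorem AEStronglyMeasurable.ae_ae_eq_of_lintegral_lintegral_eq_zero {f : E → F}
    (hf : AEStronglyMeasurable f ν) (hρν : ρ ≪ ν) {w : E → E → ℝ} (hc : 0 < c)
    (hw : ∀ x y, c ≤ w x y)
    (h : ∫⁻ y, ∫⁻ x, ENNReal.ofReal (w x y * ‖f x - f y‖ ^ 2 / ‖x - y‖ ^ s) ∂ρ ∂ν = 0) :
    ∀ᵐ y ∂ν, ∀ᵐ x ∂ρ, f x = f y := by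
  have hfg : f =ᵐ[ν] hf.mk f := hf.ae_eq_mk
  have h_le : ∀ᵐ y ∂ν, ∀ᵐ x ∂ρ,
      ENNReal.ofReal (c * ‖hf.mk f x - hf.mk f y‖ ^ 2 / ‖x - y‖ ^ s) ≤
        ENNReal.ofReal (w x y * ‖f x - f y‖ ^ 2 / ‖x - y‖ ^ s) := by
    filter_upwards [hfg] with y hy
    filter_upwards [hρν.ae_le hfg] with x hx
    rw [hx, hy]
    gcongr
    exact hw x y
  have hmk := hf.stronglyMeasurable_mk.ae_ae_eq_of_lintegral_lintegral_eq_zero hc <|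
    nonpos_iff_eq_zero.mp <| h ▸ lintegral_mono_ae (h_le.mono fun y hy => lintegral_mono_ae hy)
  filter_upwards [hmk, hfg] with y hy hfy
  filter_upwards [hy, hρν.ae_le hfg] with x hx hfx
  rw [hfx, hfy, hx]

end MeasureTheory

theorem stmt_5_general (d : ℕ) (α : ℝ)
    (μ : EuclideanSpace ℝ (Fin d) → EuclideanSpace ℝ (Fin d) → ℝ)
    (μm : ℝ) (hμm : 0 < μm) (hlb : ∀ x y, μm ≤ μ x y)
    (u : EuclideanSpace ℝ (Fin d) → ℂ)
    (hper : ∀ (x : EuclideanSpace ℝ (Fin d)) (n : Fin d → ℤ),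
      u (x + (WithLp.equiv 2 (Fin d → ℝ)).symm (fun i => (n i : ℝ))) = u x)
    (hu : MemLp u 2 (volume.restrict {x : EuclideanSpace ℝ (Fin d) | ∀ i, 0 ≤ x i ∧ x i < 1}))
    (hzero : (1 / 2 : ℝ≥0∞) * (∫⁻ y : EuclideanSpace ℝ (Fin d),
        ∫⁻ x in {x : EuclideanSpace ℝ (Fin d) | ∀ i, 0 ≤ x i ∧ x i < 1},
          ENNReal.ofReal (μ x y * ‖u x - u y‖ ^ 2 / ‖x - y‖ ^ ((d : ℝ) + α))) = 0) :
    ∃ c : ℂ, ∀ᵐ x : EuclideanSpace ℝ (Fin d), u x = c := by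
  set b := PiLp.basisFun 2 ℝ (Fin d)
  rw [← PiLp.fundamentalDomain_basisFun] at hu hzero
  have hΩ := ZSpan.isAddFundamentalDomain' b volume
  have : NeZero (volume.restrict (ZSpan.fundamentalDomain b)) :=
    ⟨by simpa using ZSpan.measure_fundamentalDomain_ne_zero b⟩
  have : Countable (Submodule.span ℤ (Set.range b)).toAddSubgroup :=
    inferInstanceAs (Countable (Submodule.span ℤ _))
  have hmeas : AEStronglyMeasurable u volume :=
    hΩ.aestronglyMeasurable_of_restrict (PiLp.apply_vadd_span_basisFun hper)
      hu.aestronglyMeasurable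
  exact exists_ae_eq_const_of_ae_ae_eq <|
    hmeas.ae_ae_eq_of_lintegral_lintegral_eq_zero Measure.restrict_le_self.absolutelyContinuous
      hμm hlb ((mul_eq_zero.mp hzero).resolve_left (by norm_num))

/-- If `μ(x,y) ≥ μ₋ > 0` is measurable, `u` is `ℤ^d`-periodic with
`u|_Ω ∈ L²(Ω)` and `(1/2) ∫_{ℝ^d} dy ∫_Ω dx μ(x,y)|u(x) − u(y)|²/|x−y|^{d+α} = 0`,
then `u` is a.e. equal to a constant on `ℝ^d`. -/
theorem stmt_5 (d : ℕ) (hd : 0 < d) (α : ℝ) (hα0 : 0 < α) (hα2 : α < 2)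
    (μ : EuclideanSpace ℝ (Fin d) → EuclideanSpace ℝ (Fin d) → ℝ)
    (hμmeas : Measurable fun p : EuclideanSpace ℝ (Fin d) × EuclideanSpace ℝ (Fin d) => μ p.1 p.2)
    (μm : ℝ) (hμm : 0 < μm) (hlb : ∀ x y, μm ≤ μ x y)
    (u : EuclideanSpace ℝ (Fin d) → ℂ)
    (hper : ∀ (x : EuclideanSpace ℝ (Fin d)) (n : Fin d → ℤ),
      u (x + (WithLp.equiv 2 (Fin d → ℝ)).symm (fun i => (n i : ℝ))) = u x)
    (hu : MemLp u 2 (volume.restrict {x : EuclideanSpace ℝ (Fin d) | ∀ i, 0 ≤ x i ∧ x i < 1}))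
    (hzero : (1 / 2 : ℝ≥0∞) * (∫⁻ y : EuclideanSpace ℝ (Fin d),
        ∫⁻ x in {x : EuclideanSpace ℝ (Fin d) | ∀ i, 0 ≤ x i ∧ x i < 1},
          ENNReal.ofReal (μ x y * ‖u x - u y‖ ^ 2 / ‖x - y‖ ^ ((d : ℝ) + α))) = 0) :
    ∃ c : ℂ, ∀ᵐ x : EuclideanSpace ℝ (Fin d), u x = c :=
  stmt_5_general d α μ μm hμm hlb u hper hu hzero
end
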